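/- arXiv:2006.10107 — 4 statements merged into one kernel-verified Lean document; each statement's English description precedes it below -/
import Mathlib

section
/- Let θ > 0, p = 1 − e^{−θ}, and ψ(t) = −log(1 − p·e^{−t})/θ (Frank generator). Let h ≥ 0 and set c = ψ(h). Then the tilted generator ψ̃(t) = ψ(t+h)/ψ(h) equals −log(1 − p̃·e^{−t})/θ̃ with θ̃ = θ·c and p̃ = 1 − e^{−θc}, i.e. the tilted Frank generator is again a Frank generator with parameter θ·ψ(h). -/
/-! Inverting the generator gives `exp (-θ ψ_θ(h)) = 1 - p e^{-h}`, so the argument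
`1 - p e^{-(s+h)}` of the logarithm in `ψ_θ(s + h)` is `1 - (1 - exp (-θ ψ_θ(h))) e^{-s}`,
which is the Frank argument with parameter `θ ψ_θ(h)`. -/

open Real

noncomputable def frankGenerator (θ t : ℝ) : ℝ :=
  -log (1 - (1 - exp (-θ)) * exp (-t)) / θ

lemma one_sub_frank_pos (θ : ℝ) {t : ℝ} (ht : 0 ≤ t) :
    0 < 1 - (1 - exp (-θ)) * exp (-t) := by
  have hmul : (1 - exp (-θ)) * exp (-t) < exp (-t) := by
    nlinarith [exp_pos (-θ), exp_pos (-t)]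
  linarith [exp_le_one_iff.mpr (neg_nonpos.mpr ht)]

lemma exp_neg_mul_frankGenerator {θ t : ℝ} (hθ : θ ≠ 0) (ht : 0 ≤ t) :
    exp (-(θ * frankGenerator θ t)) = 1 - (1 - exp (-θ)) * exp (-t) := by
  rw [frankGenerator, mul_div_cancel₀ _ hθ, neg_neg, exp_log (one_sub_frank_pos θ ht)]

theorem frankGenerator_add_div {θ h : ℝ} (hθ : θ ≠ 0) (hh : 0 ≤ h) (s : ℝ) :
    frankGenerator θ (s + h) / frankGenerator θ h
      = frankGenerator (θ * frankGenerator θ h) s := by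
  have harg : 1 - (1 - exp (-(θ * frankGenerator θ h))) * exp (-s)
      = 1 - (1 - exp (-θ)) * exp (-(s + h)) := by
    rw [exp_neg_mul_frankGenerator hθ hh, neg_add, exp_add]
    ring
  simp only [frankGenerator] at harg ⊢
  rw [harg, div_div]

/-- The tilted Frank generator is again a Frank generator with parameter `θ·ψ(h)`. -/
theorem stmt_5 (θ : ℝ) (hθ : 0 < θ) (p : ℝ) (hp : p = 1 - Real.exp (-θ))
    (ψ : ℝ → ℝ) (hψ : ∀ s, ψ s = -Real.log (1 - p * Real.exp (-s)) / θ)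
    (h : ℝ) (hh : 0 ≤ h) (c : ℝ) (hc : c = ψ h) :
    ∀ s, 0 ≤ s →
      ψ (s + h) / ψ h
        = -Real.log (1 - (1 - Real.exp (-(θ * c))) * Real.exp (-s)) / (θ * c) := by
  intro s _
  obtain rfl : ψ = frankGenerator θ := funext fun t => by rw [hψ, hp, frankGenerator]
  subst hc
  exact frankGenerator_add_div hθ.ne' hh s
end

section
/- Let C(u) = min{u_1,...,u_d} be the comonotonicity copula and t ∈ (0,1]^d. Then the right-truncated copula C_t(u) = C({C⁻¹[C(t)u_j; t_{−j}]}_j)/C(t) equals min{u_1,...,u_d} for all u ∈ [0,1]^d, where C⁻¹[y; t_{−j}] denotes the generalized inverse y ↦ inf{x : C(x;t_{−j}) ≥ y} of the section x ↦ C(t_1,...,t_{j−1},x,t_{j+1},...,t_d). -/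
/-! Every point `y` below `⨅ i, t i` lies below all the fixed coordinates of `t`, so the section
`x ↦ min(x, t_{-j})` satisfies `y ≤ min(x, t_{-j}) ↔ y ≤ x` and its generalized inverse is the
identity at `y`. With `y = C(t) u_j ≤ C(t)` the truncation becomes `min_j C(t) u_j / C(t) = min_j u_j`. -/

section ComonotonicSection

variable {ι α : Type*} [Finite ι] [DecidableEq ι] [ConditionallyCompleteLinearOrder α]
  {t : ι → α} {y : α}

lemma le_iInf_update_iff (hy : y ≤ ⨅ i, t i) (j : ι) (x : α) :
    y ≤ ⨅ i, Function.update t j x i ↔ y ≤ x := by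
  have : Nonempty ι := ⟨j⟩
  rw [le_ciInf_iff (Finite.bddBelow_range _), Function.forall_update_iff (p := fun _ z => y ≤ z)]
  exact and_iff_left fun i _ => hy.trans (ciInf_le (Finite.bddBelow_range _) i)

lemma sInf_setOf_le_iInf_update (hy : y ≤ ⨅ i, t i) (j : ι) :
    sInf {x | y ≤ ⨅ i, Function.update t j x i} = y := by
  simp_rw [le_iInf_update_iff hy j]
  exact csInf_Ici

end ComonotonicSection

/-- The right truncation of the comonotonicity copula is the comonotonicity
copula, with the generalized inverse `C⁻¹[y;t_{−j}] = inf{x : C(x;t_{−j}) ≥ y}`. -/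
theorem stmt_11 (d : ℕ) (hd : 0 < d) (C : (Fin d → ℝ) → ℝ)
    (hC : ∀ u, C u = ⨅ j, u j)
    (t : Fin d → ℝ) (ht : ∀ j, t j ∈ Set.Ioc (0:ℝ) 1)
    (Cinv : Fin d → ℝ → ℝ)
    (hCinv : ∀ j y, Cinv j y = sInf {x : ℝ | y ≤ C (Function.update t j x)})
    (u : Fin d → ℝ) (hu : ∀ j, u j ∈ Set.Icc (0:ℝ) 1) :
    C (fun j => Cinv j (C t * u j)) / C t = ⨅ j, u j := by
  have : Nonempty (Fin d) := ⟨⟨0, hd⟩⟩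
  have hCt_pos : 0 < C t := by
    obtain ⟨i, hi⟩ := exists_eq_ciInf_of_finite (f := t)
    rw [hC, ← hi]
    exact (ht i).1
  have hCinv_eq : ∀ j, Cinv j (C t * u j) = C t * u j := fun j => by
    have hy : C t * u j ≤ ⨅ i, t i := hC t ▸ mul_le_of_le_one_right hCt_pos.le (hu j).2
    simp only [hCinv, hC (Function.update t j _)]
    exact sInf_setOf_le_iInf_update hy j
  rw [hC, funext hCinv_eq, ← Real.mul_iInf_of_nonneg hCt_pos.le, mul_div_cancel_left₀ _ hCt_pos.ne']
end

section
/- Let ψ be a continuous strictly decreasing Archimedean generator and h ≥ 0, and suppose both limits L = lim_{s→∞} ψ(2s+h)/ψ(s+h) and λ = lim_{s→∞} ψ(2s)/ψ(s) exist, as well as lim_{s→∞} ψ(s)/ψ(s+h/2). Then L ≥ λ, i.e. right truncation cannot decrease the coefficient of lower tail dependence of an Archimedean copula. -/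
/-!
Shifting by `h/2`, the truncated ratio factors as
`ψ(2s+h)/ψ(s+h) = [ψ(2t)/ψ(t)] · [ψ(t)/ψ(t+h/2)]` with `t = s + h/2`, so `L = λ M`.
Since `ψ` is positive and decreasing, `λ ≥ 0` and `M ≥ 1`, whence `L ≥ λ`.
-/

open Filter Topology Set

theorem tendsto_div_two_mul_add_of_tendsto {ψ : ℝ → ℝ} {h lam M : ℝ}
    (hne : ∀ᶠ s in atTop, ψ s ≠ 0)
    (hlam : Tendsto (fun s => ψ (2 * s) / ψ s) atTop (𝓝 lam))
    (hM : Tendsto (fun s => ψ s / ψ (s + h / 2)) atTop (𝓝 M)) :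
    Tendsto (fun s => ψ (2 * s + h) / ψ (s + h)) atTop (𝓝 (lam * M)) := by
  have hshift : Tendsto (fun s : ℝ => s + h / 2) atTop atTop :=
    tendsto_atTop_add_const_right _ _ tendsto_id
  refine ((hlam.comp hshift).mul (hM.comp hshift)).congr' ?_
  filter_upwards [hshift.eventually hne] with s hs
  have e1 : 2 * (s + h / 2) = 2 * s + h := by ring
  have e2 : s + h / 2 + h / 2 = s + h := by ring
  change ψ (2 * (s + h / 2)) / ψ (s + h / 2) * (ψ (s + h / 2) / ψ (s + h / 2 + h / 2)) = _
  rw [e1, e2, div_mul_div_cancel₀ hs]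

theorem one_le_of_tendsto_div_add {ψ : ℝ → ℝ} {c M : ℝ}
    (hanti : AntitoneOn ψ (Ici 0)) (hpos : ∀ x, 0 ≤ x → 0 < ψ x) (hc : 0 ≤ c)
    (hM : Tendsto (fun s => ψ s / ψ (s + c)) atTop (𝓝 M)) : 1 ≤ M := by
  refine ge_of_tendsto hM ?_
  filter_upwards [eventually_ge_atTop 0] with s hs
  have hsc : 0 ≤ s + c := by linarith
  exact (one_le_div (hpos _ hsc)).2 (hanti hs hsc (by linarith))

theorem stmt_14_general (ψ : ℝ → ℝ)
    (hanti : StrictAntiOn ψ (Set.Ici 0))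
    (hmem : ∀ x, 0 ≤ x → ψ x ∈ Set.Ioc (0:ℝ) 1)
    (h : ℝ) (hh : 0 ≤ h) (L lam M : ℝ)
    (hL : Filter.Tendsto (fun s => ψ (2*s + h) / ψ (s + h)) Filter.atTop (nhds L))
    (hlam : Filter.Tendsto (fun s => ψ (2*s) / ψ s) Filter.atTop (nhds lam))
    (hM : Filter.Tendsto (fun s => ψ s / ψ (s + h/2)) Filter.atTop (nhds M)) :
    lam ≤ L := by
  have hpos : ∀ x, 0 ≤ x → 0 < ψ x := fun x hx => (hmem x hx).1
  have hne : ∀ᶠ s in atTop, ψ s ≠ 0 :=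
    (eventually_ge_atTop 0).mono fun s hs => (hpos s hs).ne'
  have hLM : L = lam * M :=
    tendsto_nhds_unique hL (tendsto_div_two_mul_add_of_tendsto hne hlam hM)
  have hlam0 : 0 ≤ lam := ge_of_tendsto hlam <|
    (eventually_ge_atTop 0).mono fun s hs =>
      (div_pos (hpos _ (by linarith)) (hpos s hs)).le
  have hM1 : 1 ≤ M := one_le_of_tendsto_div_add hanti.antitoneOn hpos (by linarith) hM
  rw [hLM]
  exact le_mul_of_one_le_right hlam0 hM1

/-- Right truncation cannot decrease the coefficient of lower tail dependence
of an Archimedean copula. -/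
theorem stmt_14 (ψ : ℝ → ℝ)
    (hcont : ContinuousOn ψ (Set.Ici 0)) (hanti : StrictAntiOn ψ (Set.Ici 0))
    (hψ0 : ψ 0 = 1) (hmem : ∀ x, 0 ≤ x → ψ x ∈ Set.Ioc (0:ℝ) 1)
    (h : ℝ) (hh : 0 ≤ h) (L lam M : ℝ)
    (hL : Filter.Tendsto (fun s => ψ (2*s + h) / ψ (s + h)) Filter.atTop (nhds L))
    (hlam : Filter.Tendsto (fun s => ψ (2*s) / ψ s) Filter.atTop (nhds lam))
    (hM : Filter.Tendsto (fun s => ψ s / ψ (s + h/2)) Filter.atTop (nhds M)) :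
    lam ≤ L :=
  stmt_14_general ψ hanti hmem h hh L lam M hL hlam hM
end

section
/- Let C be the nested Archimedean copula C(u) = ψ_0(Σ_{s=1}^S ψ_0⁻¹[C_s(u_s)]) with C_s(u_s) = ψ_s(Σ_j ψ_s⁻¹[u_{sj}]), let t ∈ (0,1]^d with C(t) > 0, and let C_t be the right-truncated nested Archimedean copula at t. Then for any sector s̃ and index j̃, setting all arguments except u_{s̃j̃} equal to 1 yields C_t(1,...,1,u_{s̃j̃},1,...,1) = u_{s̃j̃}; i.e. C_t has standard uniform univariate margins. -/
/-!
Put `a(x) = ψ₀(ψ₀⁻¹[C(t) x] − ψ₀⁻¹[C(t)] + ψ₀⁻¹[C_s(t_s)])`, the argument fed to the inner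
generators. Since `a(1) = C_s(t_s)`, every inner argument equal to `1` contributes exactly
`ψ_s⁻¹[C_s(t_s)]`, which the correction `(d_s − 1) ψ_s⁻¹[C_s(t_s)]` absorbs: each sector
`s ≠ s̃` collapses to `C_s(t_s)`, and sector `s̃` collapses to `a(u_{s̃j̃})`. In the outer sum
the terms `ψ₀⁻¹[C_s(t_s)]` then add up to `ψ₀⁻¹[C(t)]`, leaving `ψ₀⁻¹[C(t) u_{s̃j̃}]`.
-/

open Finset

section ArchimedeanMargin

variable {ι : Type*} [Fintype ι]

lemma Fintype.sum_eq_sum_add_sub_of_eq_of_ne (f g : ι → ℝ) (i₀ : ι)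
    (h : ∀ i ≠ i₀, f i = g i) : ∑ i, f i = ∑ i, g i + (f i₀ - g i₀) := by
  have hdiff : ∑ i, (f i - g i) = f i₀ - g i₀ :=
    Fintype.sum_eq_single i₀ fun i hi => by rw [h i hi, sub_self]
  rw [← hdiff, sum_sub_distrib]
  ring

variable {φ φinv : ℝ → ℝ} (hφ : Function.RightInverse φinv φ) (c : ℝ) (w : ι → ℝ)
include hφ

lemma archimedean_eq_of_eq_const (hw : ∀ i, w i = c) :
    φ (∑ i, φinv (w i) - ((Fintype.card ι : ℝ) - 1) * φinv c) = c := by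
  simp only [hw, sum_const, card_univ, nsmul_eq_mul]
  convert hφ c using 2
  ring

lemma archimedean_eq_of_eq_const_of_ne (i₀ : ι) (hw : ∀ i ≠ i₀, w i = c) :
    φ (∑ i, φinv (w i) - ((Fintype.card ι : ℝ) - 1) * φinv c) = w i₀ := by
  rw [Fintype.sum_eq_sum_add_sub_of_eq_of_ne (fun i => φinv (w i)) (fun _ => φinv c) i₀
    fun i hi => by rw [hw i hi]]
  simp only [sum_const, card_univ, nsmul_eq_mul]
  convert hφ (w i₀) using 2
  ring

end ArchimedeanMargin

theorem stmt_19_general (S : ℕ) (dim : Fin S → ℕ)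
    (ψ0 ψ0inv : ℝ → ℝ) (ψ ψinv : Fin S → ℝ → ℝ)
    (h0l : Function.LeftInverse ψ0inv ψ0) (h0r : Function.RightInverse ψ0inv ψ0)
    (hr : ∀ s, Function.RightInverse (ψinv s) (ψ s))
    (Cs : Fin S → ℝ)
    (Ct : ℝ) (hCtdef : Ct = ψ0 (∑ s, ψ0inv (Cs s))) (hCt : 0 < Ct)
    (s0 : Fin S) (j0 : Fin (dim s0)) (v : ℝ)
    (u : (s : Fin S) → Fin (dim s) → ℝ)
    (husj : u s0 j0 = v)
    (hu1 : ∀ s j, ¬(s = s0 ∧ HEq j j0) → u s j = 1) :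
    ψ0 (∑ s, ψ0inv (ψ s ((∑ j, ψinv s (ψ0 (ψ0inv (Ct * u s j) - ψ0inv Ct + ψ0inv (Cs s))))
        - ((dim s : ℝ) - 1) * ψinv s (Cs s)))) / Ct = v := by
  have harg_one : ∀ s j, u s j = 1 → ψ0 (ψ0inv (Ct * u s j) - ψ0inv Ct + ψ0inv (Cs s)) = Cs s :=
    fun s j h => by rw [h, mul_one, sub_self, zero_add, h0r]
  have hsector : ∀ s ≠ s0,
      ψ s ((∑ j, ψinv s (ψ0 (ψ0inv (Ct * u s j) - ψ0inv Ct + ψ0inv (Cs s))))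
        - ((dim s : ℝ) - 1) * ψinv s (Cs s)) = Cs s := fun s hs => by
    simpa using archimedean_eq_of_eq_const (hr s) (Cs s) _
      fun j => harg_one s j (hu1 s j fun h => hs h.1)
  have hsector₀ :
      ψ s0 ((∑ j, ψinv s0 (ψ0 (ψ0inv (Ct * u s0 j) - ψ0inv Ct + ψ0inv (Cs s0))))
        - ((dim s0 : ℝ) - 1) * ψinv s0 (Cs s0))
        = ψ0 (ψ0inv (Ct * v) - ψ0inv Ct + ψ0inv (Cs s0)) := by
    simpa [husj] using archimedean_eq_of_eq_const_of_ne (hr s0) (Cs s0) _ j0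
      fun j hj => harg_one s0 j (hu1 s0 j (by simp [hj]))
  have hCtinv : ψ0inv Ct = ∑ s, ψ0inv (Cs s) := by rw [hCtdef, h0l]
  rw [Fintype.sum_eq_sum_add_sub_of_eq_of_ne _ (fun s => ψ0inv (Cs s)) s0
      fun s hs => by rw [hsector s hs], hsector₀, h0l, ← hCtinv, add_sub_cancel_right,
    add_sub_cancel, h0r, mul_div_cancel_left₀ _ hCt.ne']

/-- The right-truncated nested Archimedean copula has standard uniform
univariate margins: plugging `1` into all arguments except the `(s0,j0)`-th
one (which equals `v`) yields `v`. -/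
theorem stmt_19 (S : ℕ) (dim : Fin S → ℕ)
    (ψ0 ψ0inv : ℝ → ℝ) (ψ ψinv : Fin S → ℝ → ℝ)
    (hψ0anti : StrictAnti ψ0) (hψanti : ∀ s, StrictAnti (ψ s))
    (h0l : Function.LeftInverse ψ0inv ψ0) (h0r : Function.RightInverse ψ0inv ψ0)
    (hl : ∀ s, Function.LeftInverse (ψinv s) (ψ s))
    (hr : ∀ s, Function.RightInverse (ψinv s) (ψ s))
    (t : (s : Fin S) → Fin (dim s) → ℝ) (ht : ∀ s j, t s j ∈ Set.Ioc (0:ℝ) 1)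
    (Cs : Fin S → ℝ) (hCs : ∀ s, Cs s = ψ s (∑ j, ψinv s (t s j)))
    (Ct : ℝ) (hCtdef : Ct = ψ0 (∑ s, ψ0inv (Cs s))) (hCt : 0 < Ct)
    (s0 : Fin S) (j0 : Fin (dim s0)) (v : ℝ) (hv : v ∈ Set.Icc (0:ℝ) 1)
    (u : (s : Fin S) → Fin (dim s) → ℝ)
    (husj : u s0 j0 = v)
    (hu1 : ∀ s j, ¬(s = s0 ∧ HEq j j0) → u s j = 1) :
    ψ0 (∑ s, ψ0inv (ψ s ((∑ j, ψinv s (ψ0 (ψ0inv (Ct * u s j) - ψ0inv Ct + ψ0inv (Cs s))))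
        - ((dim s : ℝ) - 1) * ψinv s (Cs s)))) / Ct = v :=
  stmt_19_general S dim ψ0 ψ0inv ψ ψinv h0l h0r hr Cs Ct hCtdef hCt s0 j0 v u husj hu1
end
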